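/- Fix h > 0 and lp with 0 < lp ≤ h/2, and let S : ℝ → ℝ be the GIMPM function: S(ξ) = (h+lp+ξ)²/(4·h·lp) for −h−lp < ξ ≤ −h+lp; S(ξ) = 1 + ξ/h for −h+lp < ξ ≤ −lp; S(ξ) = 1 − ξ²/(2·h·lp) − lp²/(2·h·lp) for −lp < ξ ≤ lp; S(ξ) = 1 − ξ/h for lp < ξ ≤ h−lp; S(ξ) = (h+lp−ξ)²/(4·h·lp) for h−lp < ξ ≤ h+lp; and S(ξ) = 0 otherwise. Then for every x ∈ ℝ, the (finitely supported) sum ∑_{a ∈ ℤ} S(x − a·h) equals 1. -/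

import Mathlib

/-- The GIMPM shape function on a grid of spacing `h` with particle half-length `lp`. -/
noncomputable def gimpS (h lp ξ : ℝ) : ℝ :=
  if -h - lp < ξ ∧ ξ ≤ -h + lp then (h + lp + ξ) ^ 2 / (4 * h * lp)
  else if -h + lp < ξ ∧ ξ ≤ -lp then 1 + ξ / h
  else if -lp < ξ ∧ ξ ≤ lp then 1 - ξ ^ 2 / (2 * h * lp) - lp ^ 2 / (2 * h * lp)
  else if lp < ξ ∧ ξ ≤ h - lp then 1 - ξ / h
  else if h - lp < ξ ∧ ξ ≤ h + lp then (h + lp - ξ) ^ 2 / (4 * h * lp)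
  else 0

lemma gimpS_b1 (h lp ξ : ℝ) (h1 : -h - lp < ξ) (h2 : ξ ≤ -h + lp) :
    gimpS h lp ξ = (h + lp + ξ) ^ 2 / (4 * h * lp) := by
  unfold gimpS; rw [if_pos ⟨h1, h2⟩]

lemma gimpS_b2 (h lp ξ : ℝ) (h1 : -h + lp < ξ) (h2 : ξ ≤ -lp) :
    gimpS h lp ξ = 1 + ξ / h := by
  unfold gimpS
  rw [if_neg (by rintro ⟨_, c⟩; linarith), if_pos ⟨h1, h2⟩]

lemma gimpS_b3 (h lp ξ : ℝ) (hh : 0 < h) (hlp : 0 < lp) (hle : lp ≤ h / 2)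
    (h1 : -lp < ξ) (h2 : ξ ≤ lp) :
    gimpS h lp ξ = 1 - ξ ^ 2 / (2 * h * lp) - lp ^ 2 / (2 * h * lp) := by
  unfold gimpS
  rw [if_neg (by rintro ⟨_, c⟩; linarith), if_neg (by rintro ⟨_, c⟩; linarith),
    if_pos ⟨h1, h2⟩]

lemma gimpS_b4 (h lp ξ : ℝ) (hh : 0 < h) (hlp : 0 < lp) (hle : lp ≤ h / 2)
    (h1 : lp < ξ) (h2 : ξ ≤ h - lp) :
    gimpS h lp ξ = 1 - ξ / h := by
  unfold gimpS
  rw [if_neg (by rintro ⟨_, c⟩; linarith), if_neg (by rintro ⟨_, c⟩; linarith),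
    if_neg (by rintro ⟨_, c⟩; linarith), if_pos ⟨h1, h2⟩]

lemma gimpS_b5 (h lp ξ : ℝ) (hh : 0 < h) (hlp : 0 < lp) (hle : lp ≤ h / 2)
    (h1 : h - lp < ξ) (h2 : ξ ≤ h + lp) :
    gimpS h lp ξ = (h + lp - ξ) ^ 2 / (4 * h * lp) := by
  unfold gimpS
  rw [if_neg (by rintro ⟨_, c⟩; linarith), if_neg (by rintro ⟨_, c⟩; linarith),
    if_neg (by rintro ⟨_, c⟩; linarith), if_neg (by rintro ⟨_, c⟩; linarith),
    if_pos ⟨h1, h2⟩]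

lemma gimpS_zero (h lp ξ : ℝ) (hh : 0 < h) (hlp : 0 < lp) (hle : lp ≤ h / 2)
    (hξ : ξ ≤ -h - lp ∨ h + lp < ξ) : gimpS h lp ξ = 0 := by
  unfold gimpS
  rcases hξ with hξ | hξ <;>
    rw [if_neg (by rintro ⟨c, c'⟩; linarith), if_neg (by rintro ⟨c, c'⟩; linarith),
      if_neg (by rintro ⟨c, c'⟩; linarith), if_neg (by rintro ⟨c, c'⟩; linarith),
      if_neg (by rintro ⟨c, c'⟩; linarith)]

/-- The integer grid translates of the GIMPM shape function form a partition of unity. -/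
theorem gimpS_partition_of_unity (h lp : ℝ) (hh : 0 < h) (hlp : 0 < lp) (hle : lp ≤ h / 2)
    (x : ℝ) :
    ∑' a : ℤ, gimpS h lp (x - (a : ℝ) * h) = 1 := by
  set n : ℤ := ⌊x / h⌋ with hn
  have ht0 : (n : ℝ) * h ≤ x := by
    have := Int.floor_le (x / h)
    rw [← hn] at this
    calc (n : ℝ) * h ≤ (x / h) * h := by nlinarith
    _ = x := by field_simp
  have ht1 : x < (n : ℝ) * h + h := by
    have := Int.lt_floor_add_one (x / h)
    rw [← hn] at this
    have : x / h * h < ((n : ℝ) + 1) * h := by nlinarith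
    have hx : x / h * h = x := by field_simp
    nlinarith
  set t : ℝ := x - (n : ℝ) * h with htdef
  have ht0' : 0 ≤ t := by simp [htdef]; linarith
  have ht1' : t < h := by simp [htdef]; linarith
  have hzero : ∀ a : ℤ, a ∉ ({n - 1, n, n + 1, n + 2} : Finset ℤ) →
      gimpS h lp (x - (a : ℝ) * h) = 0 := by
    intro a ha
    simp only [Finset.mem_insert, Finset.mem_singleton] at ha
    push_neg at ha
    have hcase : a ≤ n - 2 ∨ n + 3 ≤ a := by omega
    apply gimpS_zero h lp _ hh hlp hle
    rcases hcase with hc | hc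
    · right
      have : (a : ℝ) ≤ (n : ℝ) - 2 := by exact_mod_cast hc
      nlinarith
    · left
      have : (n : ℝ) + 3 ≤ (a : ℝ) := by exact_mod_cast hc
      nlinarith
  rw [tsum_eq_sum hzero]
  rw [Finset.sum_insert (by simp; try omega), Finset.sum_insert (by simp; try omega),
    Finset.sum_insert (by simp; try omega), Finset.sum_singleton]
  have e1 : x - ((n - 1 : ℤ) : ℝ) * h = t + h := by push_cast; simp [htdef]; try ring
  have e2 : x - ((n : ℤ) : ℝ) * h = t := by simp [htdef]
  have e3 : x - ((n + 1 : ℤ) : ℝ) * h = t - h := by push_cast; simp [htdef]; try ring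
  have e4 : x - ((n + 2 : ℤ) : ℝ) * h = t - 2 * h := by push_cast; simp [htdef]; try ring
  rw [e1, e2, e3, e4]
  rcases le_or_gt t lp with c1 | c1
  · -- 0 ≤ t ≤ lp
    rw [gimpS_b5 h lp (t + h) hh hlp hle (by linarith) (by linarith),
      gimpS_b3 h lp t hh hlp hle (by linarith) c1,
      gimpS_b1 h lp (t - h) (by linarith) (by linarith),
      gimpS_zero h lp (t - 2 * h) hh hlp hle (Or.inl (by linarith))]
    field_simp
    ring
  · rcases le_or_gt t (h - lp) with c2 | c2
    · -- lp < t ≤ h - lp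
      rw [gimpS_zero h lp (t + h) hh hlp hle (Or.inr (by linarith)),
        gimpS_b4 h lp t hh hlp hle c1 c2,
        gimpS_b2 h lp (t - h) (by linarith) (by linarith),
        gimpS_zero h lp (t - 2 * h) hh hlp hle (Or.inl (by linarith))]
      field_simp
      ring
    · -- h - lp < t < h
      rw [gimpS_zero h lp (t + h) hh hlp hle (Or.inr (by linarith)),
        gimpS_b5 h lp t hh hlp hle c2 (by linarith),
        gimpS_b3 h lp (t - h) hh hlp hle (by linarith) (by linarith),
        gimpS_b1 h lp (t - 2 * h) (by linarith) (by linarith)]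
      field_simp
      ring
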